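/- arXiv:2106.04483 — 3 statements merged into one kernel-verified Lean document; each statement's English description precedes it below -/
import Mathlib

section
/- Let F be a field and let H_v, H_u ∈ F^{N×L_Z} have full row rank N, and let F_v, F_u ∈ F^{N×L}. Let α = dim(rowspan(H_v) ∩ rowspan(H_u)). Suppose there exist matrices P_v, P_u ∈ F^{α×N} with P_v H_v = P_u H_u, rank(P_v) = rank(P_u) = α, and P_v F_v = P_u F_u. Then for ALL matrices Q_v, Q_u (with N columns, over F) satisfying Q_v H_v = Q_u H_u, one has Q_v F_v = Q_u F_u. -/
/-! The rows of `Pv * Hv` lie in `rowSpan Hv ⊓ rowSpan Hu` and, as `Hv` has independent rows,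
span a space of dimension `rank Pv = α`: they span the whole overlap. The rows of any
`Qv * Hv = Qu * Hu` lie in the overlap too, so `Qv * Hv = R * Pv * Hv` for some `R`; cancelling the
full-row-rank `Hv` and `Hu` gives `Qv = R * Pv` and `Qu = R * Pu`, whence
`Qv * Fv = R * Pv * Fv = R * Pu * Fu = Qu * Fu`. -/

open Matrix

/-- The row space of a matrix: the span of its rows in `Fin LZ → F`. -/
noncomputable def rowSpan {F : Type} [Field F] {N LZ : ℕ}
    (H : Matrix (Fin N) (Fin LZ) F) : Submodule F (Fin LZ → F) :=
  Submodule.span F (Set.range H)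

/-- Linear correctness condition for a (qualified) pair of nodes. -/
def CorrectPair (F : Type) [Field F] (L N LZ : ℕ)
    (Fv Fu : Matrix (Fin N) (Fin L) F) (Hv Hu : Matrix (Fin N) (Fin LZ) F) : Prop :=
  ∀ (k : ℕ) (Pv Pu : Matrix (Fin k) (Fin N) F),
    Pv * Hv = Pu * Hu →
    Pv.rank = Module.finrank F ↥(rowSpan Hv ⊓ rowSpan Hu) →
    Pu.rank = Module.finrank F ↥(rowSpan Hv ⊓ rowSpan Hu) →
    (Pv * Fv - Pu * Fu).rank = L

/-- Linear security condition for an (unqualified) pair of nodes. -/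
def SecurePair (F : Type) [Field F] (L N LZ : ℕ)
    (Fv Fu : Matrix (Fin N) (Fin L) F) (Hv Hu : Matrix (Fin N) (Fin LZ) F) : Prop :=
  ∀ (k : ℕ) (Pv Pu : Matrix (Fin k) (Fin N) F),
    Pv * Hv = Pu * Hu → Pv * Fv = Pu * Fu

namespace Matrix

open Submodule Set

variable {K l m n : Type*} [Field K] [Fintype m]

lemma row_mul (A : Matrix l m K) (H : Matrix m n K) : (A * H).row = H.vecMulLinear ∘ A.row :=
  funext (A.mul_apply_eq_vecMul H)

lemma span_range_row_mul (A : Matrix l m K) (H : Matrix m n K) :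
    span K (range (A * H).row) = (span K (range A.row)).map H.vecMulLinear := by
  rw [map_span, row_mul, range_comp]

lemma span_range_row_mul_le (A : Matrix l m K) (H : Matrix m n K) :
    span K (range (A * H).row) ≤ span K (range H.row) := by
  rw [span_range_row_mul, ← range_vecMulLinear H]
  exact LinearMap.map_le_range

lemma exists_eq_mul_of_span_range_row_le {k : Type*} [Fintype k] {M : Matrix l n K}
    {P : Matrix k n K} (h : span K (range M.row) ≤ span K (range P.row)) :
    ∃ R : Matrix l k K, M = R * P := by
  rw [← range_vecMulLinear P] at h
  choose R hR using fun i ↦ h (subset_span (mem_range_self i))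
  exact ⟨of R, funext fun i ↦ by rw [mul_apply_eq_vecMul]; exact (hR i).symm⟩

variable [Fintype n]

lemma vecMul_injective_of_rank_eq_card {H : Matrix m n K} (hH : H.rank = Fintype.card m) :
    Function.Injective H.vecMul := by
  rw [vecMul_injective_iff, linearIndependent_iff_card_eq_finrank_span, Set.finrank,
    ← rank_eq_finrank_span_row, hH]

lemma mul_right_cancel_of_rank_eq_card {H : Matrix m n K} (hH : H.rank = Fintype.card m)
    {A B : Matrix l m K} (h : A * H = B * H) : A = B :=
  funext fun i ↦ vecMul_injective_of_rank_eq_card hH <| by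
    simpa only [mul_apply_eq_vecMul] using congrFun h i

lemma rank_mul_of_rank_eq_card [Finite l] {H : Matrix m n K} (hH : H.rank = Fintype.card m)
    (A : Matrix l m K) : (A * H).rank = A.rank := by
  rw [rank_eq_finrank_span_row, rank_eq_finrank_span_row, span_range_row_mul]
  exact (equivMapOfInjective _ (vecMul_injective_of_rank_eq_card hH) _).finrank_eq.symm

end Matrix

lemma finrank_rowSpan {F : Type} [Field F] {N LZ : ℕ} (H : Matrix (Fin N) (Fin LZ) F) :
    Module.finrank F (rowSpan H) = H.rank :=
  (rank_eq_finrank_span_row H).symm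

lemma rowSpan_mul_le_inf {F : Type} [Field F] {k N LZ : ℕ} {Hv Hu : Matrix (Fin N) (Fin LZ) F}
    {A B : Matrix (Fin k) (Fin N) F} (h : A * Hv = B * Hu) :
    rowSpan (A * Hv) ≤ rowSpan Hv ⊓ rowSpan Hu :=
  le_inf (span_range_row_mul_le A Hv) (h ▸ span_range_row_mul_le B Hu)

lemma rowSpan_mul_eq_inf {F : Type} [Field F] {d N LZ : ℕ} {Hv Hu : Matrix (Fin N) (Fin LZ) F}
    (hHv : Hv.rank = N) {Pv Pu : Matrix (Fin d) (Fin N) F} (hP : Pv * Hv = Pu * Hu)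
    (hPv : Pv.rank = Module.finrank F ↥(rowSpan Hv ⊓ rowSpan Hu)) :
    rowSpan (Pv * Hv) = rowSpan Hv ⊓ rowSpan Hu := by
  refine Submodule.eq_of_le_of_finrank_eq (rowSpan_mul_le_inf hP) ?_
  rw [finrank_rowSpan, rank_mul_of_rank_eq_card (by simpa using hHv), hPv]

theorem security_on_full_overlap_suffices_general (F : Type) [Field F] (L N LZ : ℕ)
    (Fv Fu : Matrix (Fin N) (Fin L) F) (Hv Hu : Matrix (Fin N) (Fin LZ) F)
    (hHv : Hv.rank = N) (hHu : Hu.rank = N)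
    (d : ℕ) (hd : d = Module.finrank F ↥(rowSpan Hv ⊓ rowSpan Hu))
    (Pv Pu : Matrix (Fin d) (Fin N) F)
    (hP : Pv * Hv = Pu * Hu) (hPv : Pv.rank = d)
    (hsig : Pv * Fv = Pu * Fu) :
    ∀ (k : ℕ) (Qv Qu : Matrix (Fin k) (Fin N) F),
      Qv * Hv = Qu * Hu → Qv * Fv = Qu * Fu := by
  intro k Qv Qu hQ
  obtain ⟨R, hR⟩ : ∃ R : Matrix (Fin k) (Fin d) F, Qv * Hv = R * (Pv * Hv) :=
    exists_eq_mul_of_span_range_row_le <|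
      (rowSpan_mul_le_inf hQ).trans (rowSpan_mul_eq_inf hHv hP (hPv.trans hd)).ge
  have hQv : Qv = R * Pv :=
    mul_right_cancel_of_rank_eq_card (by simpa using hHv) (by rw [hR, Matrix.mul_assoc])
  have hQu : Qu = R * Pu :=
    mul_right_cancel_of_rank_eq_card (by simpa using hHu) (by rw [← hQ, hR, hP, Matrix.mul_assoc])
  rw [hQv, hQu, Matrix.mul_assoc, Matrix.mul_assoc, hsig]

/-- **Footnote 4 corollary.** If the signal alignment equation holds on one fixed
pair of matrices identifying the full overlap of the noise spaces, then it holds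
for all matrices identifying any subspace of the overlapping noise space. -/
theorem security_on_full_overlap_suffices (F : Type) [Field F] (L N LZ : ℕ)
    (Fv Fu : Matrix (Fin N) (Fin L) F) (Hv Hu : Matrix (Fin N) (Fin LZ) F)
    (hHv : Hv.rank = N) (hHu : Hu.rank = N)
    (d : ℕ) (hd : d = Module.finrank F ↥(rowSpan Hv ⊓ rowSpan Hu))
    (Pv Pu : Matrix (Fin d) (Fin N) F)
    (hP : Pv * Hv = Pu * Hu) (hPv : Pv.rank = d) (hPu : Pu.rank = d)
    (hsig : Pv * Fv = Pu * Fu) :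
    ∀ (k : ℕ) (Qv Qu : Matrix (Fin k) (Fin N) F),
      Qv * Hv = Qu * Hu → Qv * Fv = Qu * Fu :=
  security_on_full_overlap_suffices_general F L N LZ Fv Fu Hv Hu hHv hHu d hd Pv Pu hP hPv hsig
end

section
/- Consider a linear CDS scheme on a CDS instance. Let e = {a, b} be a qualified edge that is internal to some unqualified path P (i.e., both a and b are nodes of P), and let M be a set of m qualified edges with e ∈ M such that the graph whose edges are M is a tree on its m+1 incident nodes and every node of P is incident to some edge of M. Then m·L ≤ (m−1)·N. -/
open Matrix

/-- A CDS instance: a bipartite graph with qualified and unqualified edges. -/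
structure CDSInstance (V : Type) where
  isA : V → Prop
  qual : V → V → Prop
  unqual : V → V → Prop
  qual_symm : ∀ v u, qual v u → qual u v
  unqual_symm : ∀ v u, unqual v u → unqual u v
  qual_bip : ∀ v u, qual v u → (isA v ↔ ¬ isA u)
  unqual_bip : ∀ v u, unqual v u → (isA v ↔ ¬ isA u)

/-- An unqualified path: a list of nodes joined consecutively by unqualified
edges, with all the (unordered) edges distinct. -/
def IsUnqualPath {V : Type} (I : CDSInstance V) (P : List V) : Prop :=
  2 ≤ P.length ∧ P.Chain' I.unqual ∧
    (List.zipWith (fun a b => s(a, b)) P P.tail).Nodup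

/-- An unordered edge all of whose representatives are qualified. -/
def IsQualEdge {V : Type} (I : CDSInstance V) (e : Sym2 V) : Prop :=
  ∃ a b, e = s(a, b) ∧ I.qual a b

/-- A connected edge cover `M` of the node set of an unqualified path `P`, with
respect to an internal qualified edge `{a, b}` of `P`. -/
def IsConnCover {V : Type} (I : CDSInstance V) (a b : V) (P : List V)
    (M : Finset (Sym2 V)) : Prop :=
  s(a, b) ∈ M ∧
  (∀ e ∈ M, IsQualEdge I e) ∧
  (∀ x y : V, (∃ e ∈ M, x ∈ e) → (∃ e ∈ M, y ∈ e) →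
      Relation.ReflTransGen (fun w z => s(w, z) ∈ M) x y) ∧
  (∀ v ∈ P, ∃ e ∈ M, v ∈ e)

/-- `ρ(e, P)`: the minimum size of a connected edge cover (`+∞` if none exists). -/
noncomputable def rhoEP {V : Type} (I : CDSInstance V) (a b : V) (P : List V) : ℕ∞ :=
  sInf ((fun M : Finset (Sym2 V) => (M.card : ℕ∞)) '' {M | IsConnCover I a b P M})

/-- `ρ`: the minimum of `ρ(e, P)` over all internal qualified edges `e` of
unqualified paths `P`. -/
noncomputable def rho {V : Type} (I : CDSInstance V) : ℕ∞ :=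
  sInf {x : ℕ∞ | ∃ a b P, IsUnqualPath I P ∧ I.qual a b ∧ a ∈ P ∧ b ∈ P ∧
    x = rhoEP I a b P}

/-- A linear CDS scheme for a CDS instance. -/
def IsLinearCDSScheme {V : Type} (F : Type) [Field F] (L N LZ : ℕ) (I : CDSInstance V)
    (Fm : V → Matrix (Fin N) (Fin L) F) (Hm : V → Matrix (Fin N) (Fin LZ) F) : Prop :=
  (∀ v, (Hm v).rank = N) ∧
  (∀ v u, I.qual v u → CorrectPair F L N LZ (Fm v) (Fm u) (Hm v) (Hm u)) ∧
  (∀ v u, I.unqual v u → SecurePair F L N LZ (Fm v) (Fm u) (Hm v) (Hm u))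

/-!
Let `R v` be the row space of `H_v`, of dimension at most `N`, and `J` the intersection of the
`R v` over the nodes of `M`. Correctness at a qualified edge `{u, v}` gives
`dim (R u ∩ R v) ≥ L`, so growing `M` from `{a, b}` one edge at a time, each new edge costs at
most `N - L` dimensions: `dim (R a ∩ R b) + (m - 1) L ≤ dim J + (m - 1) N`. On `J`, every node
of `M` decodes the same value — security along the unqualified path `P`, which `M` covers — so
correctness at `{a, b}` forces `L + dim J ≤ dim (R a ∩ R b)`. Together, `m L ≤ (m - 1) N`.
-/

open Module

section RowSpan

variable {F : Type} [Field F] {N LZ : ℕ}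

theorem mem_rowSpan_iff {H : Matrix (Fin N) (Fin LZ) F} {x : Fin LZ → F} :
    x ∈ rowSpan H ↔ ∃ p : Fin N → F, p ᵥ* H = x := by
  change x ∈ Submodule.span F (Set.range H.row) ↔ _
  rw [← range_vecMulLinear, LinearMap.mem_range]
  rfl

theorem finrank_rowSpan_le (H : Matrix (Fin N) (Fin LZ) F) : finrank F (rowSpan H) ≤ N :=
  (finrank_range_le_card (R := F) H).trans_eq (Fintype.card_fin N)

theorem Matrix.vecMul_injective_of_rank_eq {H : Matrix (Fin N) (Fin LZ) F} (h : H.rank = N) :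
    Function.Injective H.vecMul := by
  rw [Matrix.vecMul_injective_iff, linearIndependent_iff_card_eq_finrank_span, Fintype.card_fin,
    Set.finrank, ← H.rank_eq_finrank_span_row, h]

theorem Matrix.rank_eq_finrank_range_vecMulLinear {k L : ℕ} (D : Matrix (Fin k) (Fin L) F) :
    D.rank = finrank F (LinearMap.range D.vecMulLinear) := by
  rw [← D.rank_transpose, Matrix.rank, Matrix.mulVecLin_transpose]

end RowSpan

section Pairs

variable {F : Type} [Field F] {L N LZ : ℕ} {Fu Fv : Matrix (Fin N) (Fin L) F}
  {Hu Hv : Matrix (Fin N) (Fin LZ) F}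

theorem SecurePair.vecMul_eq (hs : SecurePair F L N LZ Fu Fv Hu Hv) {p q : Fin N → F}
    (h : p ᵥ* Hu = q ᵥ* Hv) : p ᵥ* Fu = q ᵥ* Fv := by
  have h1 := hs 1 (Matrix.replicateRow _ p) (Matrix.replicateRow _ q) (by
    rw [← Matrix.replicateRow_vecMul, ← Matrix.replicateRow_vecMul, h])
  rw [← Matrix.replicateRow_vecMul, ← Matrix.replicateRow_vecMul] at h1
  exact congrFun h1 0

/-- Correctness applied to the rows of a basis of `W = rowSpan Hu ⊓ rowSpan Hv` yields a matrix
of rank `L` that kills the coefficients of the vectors of `J`, so `L ≤ dim W - dim J`. -/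
theorem CorrectPair.add_finrank_le (hc : CorrectPair F L N LZ Fu Fv Hu Hv)
    {J : Submodule F (Fin LZ → F)} (hJ : J ≤ rowSpan Hu ⊓ rowSpan Hv)
    (hagree : ∀ p q : Fin N → F, p ᵥ* Hu = q ᵥ* Hv → p ᵥ* Hu ∈ J → p ᵥ* Fu = q ᵥ* Fv) :
    L + finrank F J ≤ finrank F ↥(rowSpan Hu ⊓ rowSpan Hv) := by
  set W := rowSpan Hu ⊓ rowSpan Hv
  let b := finBasis F W
  let X : Matrix (Fin (finrank F W)) (Fin LZ) F := fun i => b i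
  have hXrank : X.rank = finrank F W := by
    simpa using (b.linearIndependent.map' W.subtype W.ker_subtype).rank_matrix
  choose Pu hPu using fun i => mem_rowSpan_iff.1 (b i).2.1
  choose Pv hPv using fun i => mem_rowSpan_iff.1 (b i).2.2
  have hPuX : Matrix.of Pu * Hu = X := funext hPu
  have hPvX : Matrix.of Pv * Hv = X := funext hPv
  have hrank : ∀ {P : Matrix (Fin (finrank F W)) (Fin N) F} {H : Matrix (Fin N) (Fin LZ) F},
      P * H = X → P.rank = finrank F W := fun {P H} hPX =>
    le_antisymm P.rank_le_height (by simpa only [hPX, hXrank] using P.rank_mul_le_left H)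
  set D := Matrix.of Pu * Fu - Matrix.of Pv * Fv
  have hD : D.rank = L := hc _ _ _ (hPuX.trans hPvX.symm) (hrank hPuX) (hrank hPvX)
  have hker : J.comap X.vecMulLinear ≤ LinearMap.ker D.vecMulLinear := by
    intro c hc
    have hu : (c ᵥ* Matrix.of Pu) ᵥ* Hu = c ᵥ* X := by rw [Matrix.vecMul_vecMul, hPuX]
    have hv : (c ᵥ* Matrix.of Pv) ᵥ* Hv = c ᵥ* X := by rw [Matrix.vecMul_vecMul, hPvX]
    simp only [LinearMap.mem_ker, Matrix.vecMulLinear_apply, D, Matrix.vecMul_sub,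
      ← Matrix.vecMul_vecMul, sub_eq_zero]
    exact hagree _ _ (hu.trans hv.symm) (hu ▸ hc)
  have hJcomap : finrank F J ≤ finrank F (J.comap X.vecMulLinear) := by
    have hJX : J ≤ LinearMap.range X.vecMulLinear := by
      rw [range_vecMulLinear, show X.row = W.subtype ∘ b from rfl, Set.range_comp,
        ← Submodule.map_span, b.span_eq, Submodule.map_top, Submodule.range_subtype]
      exact hJ
    conv_lhs => rw [← Submodule.map_comap_eq_self hJX]
    exact Submodule.finrank_map_le _ _
  have hnullity := D.vecMulLinear.finrank_range_add_finrank_ker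
  rw [← D.rank_eq_finrank_range_vecMulLinear, hD, finrank_fin_fun] at hnullity
  have := Submodule.finrank_mono hker
  omega

theorem CorrectPair.le_finrank_inf (hc : CorrectPair F L N LZ Fu Fv Hu Hv) (hu : Hu.rank = N)
    (hv : Hv.rank = N) :
    L ≤ finrank F ↥(rowSpan Hu ⊓ rowSpan Hv) := by
  refine le_of_add_le_left (hc.add_finrank_le bot_le fun p q hpq hp => ?_)
  rw [Submodule.mem_bot] at hp
  obtain rfl : p = 0 := Matrix.vecMul_injective_of_rank_eq hu (by simp [hp])
  obtain rfl : q = 0 := Matrix.vecMul_injective_of_rank_eq hv (by simp [← hpq])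
  simp

end Pairs

theorem IsQualEdge.qual {V : Type} {I : CDSInstance V} {u v : V} (h : IsQualEdge I s(u, v)) :
    I.qual u v := by
  obtain ⟨a, b, hab, hq⟩ := h
  rcases Sym2.eq_iff.1 hab with ⟨rfl, rfl⟩ | ⟨rfl, rfl⟩
  exacts [hq, I.qual_symm _ _ hq]

theorem List.IsChain.apply_eq_apply {α β : Type*} {r : α → α → Prop} {l : List α}
    (hl : l.IsChain r) {f : α → β} (hf : ∀ u ∈ l, ∀ v ∈ l, r u v → f u = f v)
    {u v : α} (hu : u ∈ l) (hv : v ∈ l) : f u = f v := by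
  have hmap : (l.map f).IsChain (· = ·) :=
    List.isChain_map f |>.2 (hl.imp_of_mem_imp fun a b ha hb => hf a ha b hb)
  obtain ⟨a, t, rfl⟩ := List.exists_cons_of_ne_nil (List.ne_nil_of_mem hu)
  have hrep := List.isChain_eq_iff_eq_replicate.1 hmap (f a) rfl
  have hu' : f u ∈ (a :: t).map f := List.mem_map_of_mem hu
  have hv' : f v ∈ (a :: t).map f := List.mem_map_of_mem hv
  rw [hrep] at hu' hv'
  rw [List.eq_of_mem_replicate hu', List.eq_of_mem_replicate hv']

section Decoding

variable {V F : Type} [Field F] {L N LZ : ℕ} {Fm : V → Matrix (Fin N) (Fin L) F}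
  {Hm : V → Matrix (Fin N) (Fin LZ) F}

/-- Full row rank makes the decoding of `x` at a node well defined, and security makes it
constant along the chain. -/
theorem vecMul_eq_of_isChain (hrank : ∀ v, (Hm v).rank = N) {r : V → V → Prop}
    (hsec : ∀ u v, r u v → SecurePair F L N LZ (Fm u) (Fm v) (Hm u) (Hm v))
    {P : List V} (hP : P.IsChain r) {x : Fin LZ → F} (hx : ∀ v ∈ P, x ∈ rowSpan (Hm v))
    {u v : V} (hu : u ∈ P) (hv : v ∈ P) {p q : Fin N → F} (hp : p ᵥ* Hm u = x)
    (hq : q ᵥ* Hm v = x) : p ᵥ* Fm u = q ᵥ* Fm v := by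
  let decode (w : V) : Fin L → F := Function.invFun (· ᵥ* Hm w) x ᵥ* Fm w
  have decode_eq : ∀ w (p : Fin N → F), p ᵥ* Hm w = x → decode w = p ᵥ* Fm w := by
    rintro w p rfl
    simp only [decode,
      Function.leftInverse_invFun (Matrix.vecMul_injective_of_rank_eq (hrank w)) p]
  rw [← decode_eq u p hp, ← decode_eq v q hq]
  refine hP.apply_eq_apply (fun u hu v hv huv => ?_) hu hv
  obtain ⟨p', hp'⟩ := mem_rowSpan_iff.1 (hx u hu)
  obtain ⟨q', hq'⟩ := mem_rowSpan_iff.1 (hx v hv)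
  rw [decode_eq u p' hp', decode_eq v q' hq']
  exact (hsec u v huv).vecMul_eq (hp'.trans hq'.symm)

end Decoding

section EdgeSets

variable {V : Type}

def incidentNodes (M : Finset (Sym2 V)) : Set V := {v | ∃ e ∈ M, v ∈ e}

theorem incidentNodes_insert [DecidableEq V] (M : Finset (Sym2 V)) (u v : V) :
    incidentNodes (insert s(u, v) M) = incidentNodes M ∪ {u, v} := by
  ext w
  simp only [incidentNodes, Finset.mem_insert, exists_eq_or_imp, Sym2.mem_iff, Set.mem_union,
    Set.mem_ofPred_eq, Set.mem_insert_iff, Set.mem_singleton_iff]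
  exact or_comm

theorem incidentNodes_singleton (u v : V) : incidentNodes {s(u, v)} = {u, v} := by
  ext w
  simp [incidentNodes, Sym2.mem_iff]

theorem exists_incident_edge_of_ssubset {M M' : Finset (Sym2 V)}
    (hconn : ∀ x y, x ∈ incidentNodes M → y ∈ incidentNodes M →
      Relation.ReflTransGen (fun w z => s(w, z) ∈ M) x y)
    (hM' : M' ⊂ M) (hne : M'.Nonempty) :
    ∃ u v, s(u, v) ∈ M ∧ s(u, v) ∉ M' ∧ u ∈ incidentNodes M' := by
  by_contra! hfar
  obtain ⟨e₀, he₀⟩ := hne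
  induction e₀ using Sym2.ind with | _ x₀ y₀ => ?_
  -- the nodes of `M'` are closed under steps along `M`
  have hclosed : ∀ y, Relation.ReflTransGen (fun w z => s(w, z) ∈ M) x₀ y →
      y ∈ incidentNodes M' := by
    intro y hy
    induction hy with
    | refl => exact ⟨_, he₀, Sym2.mem_mk_left _ _⟩
    | tail _ hbc ih =>
      by_contra hc
      exact hfar _ _ hbc (fun hbc' => hc ⟨_, hbc', Sym2.mem_mk_right _ _⟩) ih
  obtain ⟨e₁, he₁M, he₁M'⟩ := Finset.exists_of_ssubset hM'
  induction e₁ using Sym2.ind with | _ x₁ y₁ => ?_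
  refine hfar _ _ he₁M he₁M' (hclosed x₁ (hconn x₀ x₁ ?_ ⟨_, he₁M, Sym2.mem_mk_left _ _⟩))
  exact ⟨_, hM'.subset he₀, Sym2.mem_mk_left _ _⟩

end EdgeSets

section Growth

variable {K E : Type*} [Field K] [AddCommGroup E] [Module K E] [FiniteDimensional K E]

theorem Submodule.finrank_add_le_finrank_inf_add {A B C : Submodule K E} (hA : A ≤ C)
    (hB : B ≤ C) : finrank K A + finrank K B ≤ finrank K ↥(A ⊓ B) + finrank K C := by
  have := Submodule.finrank_sup_add_finrank_inf_eq A B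
  have := Submodule.finrank_mono (sup_le hA hB)
  omega

/-- Adding to `M'` an edge `{u, v}` that touches it at `u` costs at most `n - L` dimensions of
the intersection, since `⨅ R` over `M'` and `R u ⊓ R v` both lie in `R u`. -/
theorem finrank_iInf_incidentNodes_add_le {V : Type} [DecidableEq V] (R : V → Submodule K E)
    {n L : ℕ} (hR : ∀ v, finrank K (R v) ≤ n) {M : Finset (Sym2 V)}
    (hedge : ∀ u v, s(u, v) ∈ M → L ≤ finrank K ↥(R u ⊓ R v))
    (hconn : ∀ x y, x ∈ incidentNodes M → y ∈ incidentNodes M →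
      Relation.ReflTransGen (fun w z => s(w, z) ∈ M) x y)
    {M' : Finset (Sym2 V)} (hsub : M' ⊆ M) (hne : M'.Nonempty) :
    finrank K ↥(⨅ v ∈ incidentNodes M', R v) + (M.card - M'.card) * L ≤
      finrank K ↥(⨅ v ∈ incidentNodes M, R v) + (M.card - M'.card) * n := by
  obtain ⟨d, hd⟩ : ∃ d, M.card - M'.card = d := ⟨_, rfl⟩
  induction d generalizing M' with
  | zero =>
    rw [Finset.eq_of_subset_of_card_le hsub (by omega)]
    simp
  | succ d ih =>
    have hssub : M' ⊂ M := Finset.ssubset_iff_subset_ne.2 ⟨hsub, by rintro rfl; simp at hd⟩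
    obtain ⟨u, v, huvM, huvM', hu⟩ := exists_incident_edge_of_ssubset hconn hssub hne
    have hstep : finrank K ↥(⨅ w ∈ incidentNodes M', R w) + L ≤
        finrank K ↥(⨅ w ∈ incidentNodes (insert s(u, v) M'), R w) + n := by
      rw [incidentNodes_insert, iInf_union, iInf_pair]
      have := Submodule.finrank_add_le_finrank_inf_add (biInf_le R hu) (inf_le_left (b := R v))
      have := hedge u v huvM
      have := hR u
      omega
    have hd' : M.card - (insert s(u, v) M').card = d := by
      rw [Finset.card_insert_of_notMem huvM']
      omega
    have := ih (Finset.insert_subset huvM hsub) (Finset.insert_nonempty _ _) hd'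
    rw [hd'] at this
    rw [hd, add_mul, add_mul, one_mul, one_mul]
    omega

end Growth

theorem cds_tree_cover_inequality_general {V : Type} (F : Type) [Field F]
    (L N LZ : ℕ)
    (I : CDSInstance V)
    (Fm : V → Matrix (Fin N) (Fin L) F) (Hm : V → Matrix (Fin N) (Fin LZ) F)
    (hscheme : IsLinearCDSScheme F L N LZ I Fm Hm)
    (a b : V) (P : List V) (hP : IsUnqualPath I P)
    (hq : I.qual a b) (ha : a ∈ P) (hb : b ∈ P)
    (M : Finset (Sym2 V)) (m : ℕ) (hm : M.card = m)
    (heM : s(a, b) ∈ M)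
    (hMq : ∀ e ∈ M, IsQualEdge I e)
    (hconn : ∀ x y : V, (∃ e ∈ M, x ∈ e) → (∃ e ∈ M, y ∈ e) →
        Relation.ReflTransGen (fun w z => s(w, z) ∈ M) x y)
    (hcover : ∀ v ∈ P, ∃ e ∈ M, v ∈ e) :
    m * L ≤ (m - 1) * N := by
  classical
  obtain ⟨hrank, hcorrect, hsecure⟩ := hscheme
  let R (v : V) := rowSpan (Hm v)
  have hgrow := finrank_iInf_incidentNodes_add_le R (fun v => finrank_rowSpan_le (Hm v))
    (fun u v huv => (hcorrect u v (hMq _ huv).qual).le_finrank_inf (hrank u) (hrank v)) hconn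
    (Finset.singleton_subset_iff.2 heM) (Finset.singleton_nonempty _)
  rw [incidentNodes_singleton, iInf_pair, Finset.card_singleton, hm] at hgrow
  have hJ : (⨅ v ∈ incidentNodes M, R v) ≤ R a ⊓ R b :=
    le_inf (biInf_le R ⟨_, heM, Sym2.mem_mk_left a b⟩)
      (biInf_le R ⟨_, heM, Sym2.mem_mk_right a b⟩)
  have hkey := (hcorrect a b hq).add_finrank_le hJ fun p q hpq hpJ =>
    vecMul_eq_of_isChain hrank hsecure hP.2.1 (fun v hv => biInf_le R (hcover v hv) hpJ)
      ha hb rfl hpq.symm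
  obtain ⟨n, rfl⟩ : ∃ n, m = n + 1 :=
    Nat.exists_eq_add_one.2 (hm ▸ Finset.card_pos.2 ⟨_, heM⟩)
  rw [add_tsub_cancel_right] at hgrow ⊢
  linarith

/-- **Core inequality of the converse proof of Theorem 1.** If `{a, b}` is a
qualified edge internal to an unqualified path `P`, and `M` is a set of `m`
qualified edges containing `{a, b}` that forms a tree on its `m + 1` incident
nodes and covers every node of `P`, then any linear CDS scheme satisfies
`m·L ≤ (m−1)·N`. -/
theorem cds_tree_cover_inequality {V : Type} (F : Type) [Field F]
    (L N LZ : ℕ) (hL : 0 < L) (hN : 0 < N) (hLZ : 0 < LZ)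
    (I : CDSInstance V)
    (Fm : V → Matrix (Fin N) (Fin L) F) (Hm : V → Matrix (Fin N) (Fin LZ) F)
    (hscheme : IsLinearCDSScheme F L N LZ I Fm Hm)
    (a b : V) (P : List V) (hP : IsUnqualPath I P)
    (hq : I.qual a b) (ha : a ∈ P) (hb : b ∈ P)
    (M : Finset (Sym2 V)) (m : ℕ) (hm : M.card = m)
    (heM : s(a, b) ∈ M)
    (hMq : ∀ e ∈ M, IsQualEdge I e)
    (hconn : ∀ x y : V, (∃ e ∈ M, x ∈ e) → (∃ e ∈ M, y ∈ e) →
        Relation.ReflTransGen (fun w z => s(w, z) ∈ M) x y)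
    (hnodes : Set.ncard {v : V | ∃ e ∈ M, v ∈ e} = m + 1)
    (hcover : ∀ v ∈ P, ∃ e ∈ M, v ∈ e) :
    m * L ≤ (m - 1) * N :=
  cds_tree_cover_inequality_general F L N LZ I Fm Hm hscheme a b P hP hq ha hb M m hm heM hMq hconn
    hcover
end

section
/- There exist a positive integer L_Z and, for each of the seven nodes A1, A2, A3, A4, B1, B2, B3, matrices F_v ∈ F_3^{5×4} and H_v ∈ F_3^{5×L_Z} with each H_v of full row rank 5, such that the correctness condition (with L = 4) holds for the five pairs {A1,B1}, {A4,B1}, {A4,B2}, {A4,B3}, {A3,B3}, and the security condition holds for the three pairs {A1,B2}, {A3,B2}, {A3,B1}. Consequently the linear rate 2/5 is achievable for this CDS instance. -/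
open Matrix

instance : Fact (Nat.Prime 3) := ⟨by norm_num⟩

/-- The seven nodes of the CDS instance of Figure 2. -/
inductive Node7 : Type
  | A1 | A2 | A3 | A4 | B1 | B2 | B3

open Node7

/-!
A pair `{v, u}` is secure as soon as both secret parts factor through one common map of the
randomness, `F_v = H_v T` and `F_u = H_u T`: then `P_v H_v = P_u H_u` forces
`P_v F_v = P_v H_v T = P_u H_u T = P_u F_u`.

A pair is correct as soon as there is a decoder `(A_v, A_u)`, a pair of combinations of the two
signals with `A_v H_v = A_u H_u` and `A_v F_v - A_u F_u = 1`. Indeed, as `H_v` has full row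
rank, `a ↦ a H_v` maps `{a | a H_v ∈ rowspan H_u}` isomorphically onto
`rowspan H_v ∩ rowspan H_u`; the rows of any admissible `P_v` lie in that space and, by the rank
condition, span it. Hence `A_v = M P_v` for some `M`, then `A_u = M P_u` because `H_u` has full
row rank, and `M (P_v F_v - P_u F_u) = 1` gives the rank `L`.

For Figure 2 (with `L_Z = 10`) the right inverses certifying that each `H_v` has full row rank,
the decoders and the common maps `T` are explicit matrices over `𝔽₃`, checked by `decide`.
-/

namespace Matrix

variable {F : Type} [Field F] {k N LZ : ℕ}

lemma rank_eq_of_mul_eq_one {H : Matrix (Fin N) (Fin LZ) F} {R : Matrix (Fin LZ) (Fin N) F}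
    (hR : H * R = 1) : H.rank = N := by
  refine le_antisymm H.rank_le_height ?_
  simpa [hR] using H.rank_mul_le_left R

lemma vecMul_injective_of_rank_eq_s13 {H : Matrix (Fin N) (Fin LZ) F} (hH : H.rank = N) :
    Function.Injective H.vecMul := by
  rw [vecMul_injective_iff, linearIndependent_iff_card_eq_finrank_span, Set.finrank,
    ← rank_eq_finrank_span_row, hH, Fintype.card_fin]

lemma eq_of_mul_eq_mul_of_rank_eq {H : Matrix (Fin N) (Fin LZ) F} (hH : H.rank = N)
    {A B : Matrix (Fin k) (Fin N) F} (h : A * H = B * H) : A = B :=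
  funext fun i => vecMul_injective_of_rank_eq_s13 hH (congrFun h i)

end Matrix

section RowSpan

variable {F : Type} [Field F] {k m N LZ : ℕ}

lemma rowSpan_eq_range_vecMulLinear (H : Matrix (Fin N) (Fin LZ) F) :
    rowSpan H = LinearMap.range H.vecMulLinear :=
  (range_vecMulLinear H).symm

lemma rank_eq_finrank_rowSpan (P : Matrix (Fin k) (Fin N) F) :
    P.rank = Module.finrank F (rowSpan P) :=
  P.rank_eq_finrank_span_row

lemma rowSpan_le_comap_of_mul_eq_mul {Hv Hu : Matrix (Fin N) (Fin LZ) F}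
    {Av Au : Matrix (Fin k) (Fin N) F} (h : Av * Hv = Au * Hu) :
    rowSpan Av ≤ (rowSpan Hu).comap Hv.vecMulLinear := by
  rw [rowSpan, Submodule.span_le]
  rintro _ ⟨i, rfl⟩
  change (Av * Hv) i ∈ rowSpan Hu
  rw [h, rowSpan_eq_range_vecMulLinear]
  exact ⟨Au i, rfl⟩

lemma finrank_comap_rowSpan {Hv : Matrix (Fin N) (Fin LZ) F} (hv : Hv.rank = N)
    (Hu : Matrix (Fin m) (Fin LZ) F) :
    Module.finrank F ((rowSpan Hu).comap Hv.vecMulLinear) =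
      Module.finrank F ↥(rowSpan Hv ⊓ rowSpan Hu) := by
  rw [rowSpan_eq_range_vecMulLinear Hv, ← Submodule.map_comap_eq]
  exact (Submodule.equivMapOfInjective _ (Matrix.vecMul_injective_of_rank_eq_s13 hv) _).finrank_eq

lemma exists_eq_mul_of_rowSpan_le {A : Matrix (Fin m) (Fin N) F} {P : Matrix (Fin k) (Fin N) F}
    (h : rowSpan A ≤ rowSpan P) : ∃ M : Matrix (Fin m) (Fin k) F, A = M * P := by
  have hrow (i : Fin m) : ∃ c, c ᵥ* P = A i := by
    rw [rowSpan_eq_range_vecMulLinear P] at h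
    exact h (Submodule.subset_span ⟨i, rfl⟩)
  choose c hc using hrow
  exact ⟨Matrix.of c, funext fun i => (hc i).symm⟩

end RowSpan

section CDS

variable {F : Type} [Field F] {L N LZ : ℕ}

lemma correctPair_of_decoder {Fv Fu : Matrix (Fin N) (Fin L) F}
    {Hv Hu : Matrix (Fin N) (Fin LZ) F} (hv : Hv.rank = N) (hu : Hu.rank = N)
    {Av Au : Matrix (Fin L) (Fin N) F} (hH : Av * Hv = Au * Hu) (hF : Av * Fv - Au * Fu = 1) :
    CorrectPair F L N LZ Fv Fu Hv Hu := by
  intro k Pv Pu hP hrank _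
  have hspan : rowSpan Pv = (rowSpan Hu).comap Hv.vecMulLinear :=
    Submodule.eq_of_le_of_finrank_eq (rowSpan_le_comap_of_mul_eq_mul hP)
      (by rw [← rank_eq_finrank_rowSpan, hrank, finrank_comap_rowSpan hv])
  obtain ⟨M, rfl⟩ := exists_eq_mul_of_rowSpan_le (hspan ▸ rowSpan_le_comap_of_mul_eq_mul hH)
  obtain rfl : Au = M * Pu := Matrix.eq_of_mul_eq_mul_of_rank_eq hu <| by
    rw [← hH, Matrix.mul_assoc, hP, Matrix.mul_assoc]
  have hM : M * (Pv * Fv - Pu * Fu) = 1 := by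
    rw [Matrix.mul_sub, ← Matrix.mul_assoc, ← Matrix.mul_assoc, hF]
  refine le_antisymm (Matrix.rank_le_width _) ?_
  calc L = (1 : Matrix (Fin L) (Fin L) F).rank := by simp
    _ ≤ (Pv * Fv - Pu * Fu).rank := hM ▸ Matrix.rank_mul_le_right _ _

lemma securePair_of_simulator {Fv Fu : Matrix (Fin N) (Fin L) F}
    {Hv Hu : Matrix (Fin N) (Fin LZ) F} {T : Matrix (Fin LZ) (Fin L) F}
    (hv : Fv = Hv * T) (hu : Fu = Hu * T) : SecurePair F L N LZ Fv Fu Hv Hu := by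
  intro _ Pv Pu hP
  rw [hv, hu, ← Matrix.mul_assoc, hP, Matrix.mul_assoc]

end CDS

namespace Fig2

/- Node `v` sends `F_v s + H_v z` for the secret `s ∈ 𝔽₃⁴` and the common randomness
`z ∈ 𝔽₃¹⁰`. No condition involves `A2`, which reuses the matrices of `A1`. -/

def secretMatrix : Node7 → Matrix (Fin 5) (Fin 4) (ZMod 3)
  | A1 | A2 => !![0, 1, 1, 2; 0, 1, 0, 2; 0, 2, 0, 0; 1, 2, 0, 0; 2, 0, 2, 2]
  | A3 => !![2, 0, 0, 2; 2, 1, 2, 2; 1, 1, 0, 2; 2, 1, 2, 0; 1, 2, 1, 1]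
  | A4 => !![2, 2, 0, 0; 0, 2, 1, 0; 1, 1, 0, 1; 2, 1, 0, 0; 1, 1, 0, 2]
  | B1 => !![0, 2, 1, 2; 2, 1, 2, 1; 2, 2, 0, 2; 1, 0, 0, 0; 2, 0, 1, 0]
  | B2 => !![2, 0, 2, 0; 2, 2, 2, 2; 1, 1, 1, 2; 1, 2, 0, 0; 1, 1, 1, 1]
  | B3 => !![0, 0, 0, 0; 0, 2, 1, 1; 0, 1, 1, 1; 0, 2, 2, 0; 2, 2, 2, 2]

def randomnessMatrix : Node7 → Matrix (Fin 5) (Fin 10) (ZMod 3)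
  | A1 | A2 => !![0, 0, 0, 1, 1, 2, 2, 0, 2, 2; 1, 1, 0, 2, 1, 0, 0, 0, 0, 0;
                  2, 2, 0, 2, 2, 1, 1, 0, 1, 1; 2, 1, 0, 2, 2, 0, 0, 0, 0, 0;
                  2, 0, 0, 0, 0, 0, 1, 1, 2, 1]
  | A3 => !![0, 1, 2, 1, 1, 2, 0, 1, 1, 2; 0, 1, 2, 2, 1, 1, 0, 2, 2, 1;
             1, 2, 2, 0, 0, 1, 0, 2, 2, 1; 1, 2, 1, 2, 2, 1, 0, 2, 2, 1;
             2, 1, 2, 0, 1, 2, 2, 0, 1, 1]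
  | A4 => !![1, 0, 0, 0, 0, 0, 0, 0, 0, 0; 0, 1, 0, 0, 0, 0, 0, 0, 0, 0;
             0, 0, 1, 0, 0, 0, 0, 0, 0, 0; 0, 0, 0, 1, 0, 0, 0, 0, 0, 0;
             0, 0, 0, 0, 1, 0, 0, 0, 0, 0]
  | B1 => !![1, 0, 0, 1, 0, 0, 0, 0, 0, 0; 1, 1, 2, 1, 1, 0, 0, 0, 0, 0;
             1, 2, 1, 0, 0, 0, 0, 0, 0, 0; 1, 0, 1, 0, 2, 0, 0, 0, 0, 0;
             2, 2, 0, 0, 1, 1, 1, 0, 1, 1]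
  | B2 => !![2, 2, 2, 1, 1, 0, 0, 0, 0, 0; 2, 0, 1, 0, 1, 0, 0, 0, 0, 0;
             2, 1, 1, 0, 0, 0, 0, 0, 0, 0; 2, 0, 0, 1, 2, 0, 0, 0, 0, 0;
             1, 0, 1, 0, 1, 2, 2, 1, 0, 2]
  | B3 => !![2, 1, 0, 1, 2, 0, 0, 0, 0, 0; 1, 1, 0, 2, 0, 0, 0, 0, 0, 0;
             0, 1, 2, 1, 2, 0, 0, 0, 0, 0; 2, 2, 1, 2, 1, 0, 0, 0, 0, 0;
             1, 2, 0, 1, 2, 2, 0, 1, 1, 2]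

def rightInverse : Node7 → Matrix (Fin 10) (Fin 5) (ZMod 3)
  | A1 | A2 => !![0, 0, 0, 0, 2; 2, 0, 2, 0, 1; 0, 0, 0, 0, 0; 2, 1, 2, 1, 1; 0, 2, 0, 1, 1;
                  1, 0, 2, 2, 2; 0, 0, 0, 0, 0; 0, 0, 0, 0, 0; 0, 0, 0, 0, 0; 0, 0, 0, 0, 0]
  | A3 => !![1, 0, 0, 1, 0; 2, 2, 1, 0, 1; 0, 0, 1, 0, 1; 0, 0, 0, 2, 2; 0, 0, 0, 0, 0;
             1, 2, 0, 2, 2; 0, 0, 0, 0, 0; 0, 0, 0, 0, 0; 0, 0, 0, 0, 0; 0, 0, 0, 0, 0]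
  | A4 => !![1, 0, 0, 0, 0; 0, 1, 0, 0, 0; 0, 0, 1, 0, 0; 0, 0, 0, 1, 0; 0, 0, 0, 0, 1;
             0, 0, 0, 0, 0; 0, 0, 0, 0, 0; 0, 0, 0, 0, 0; 0, 0, 0, 0, 0; 0, 0, 0, 0, 0]
  | B1 => !![0, 0, 1, 2, 2; 2, 1, 2, 2, 1; 2, 1, 2, 0, 2; 1, 0, 2, 1, 1; 2, 1, 0, 1, 1;
             0, 0, 0, 0, 0; 0, 0, 0, 0, 0; 0, 0, 0, 0, 0; 0, 0, 0, 0, 0; 0, 0, 0, 0, 0]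
  | B2 => !![0, 1, 0, 0, 2; 2, 1, 0, 1, 1; 1, 0, 1, 2, 1; 2, 0, 2, 2, 0; 2, 2, 2, 1, 1;
             0, 0, 0, 0, 0; 0, 0, 0, 0, 0; 0, 0, 0, 0, 0; 0, 0, 0, 0, 0; 0, 0, 0, 0, 0]
  | B3 => !![0, 0, 2, 2, 0; 2, 0, 2, 2, 1; 1, 0, 1, 2, 0; 2, 2, 1, 1, 1; 0, 2, 1, 1, 2;
             0, 0, 0, 0, 0; 0, 0, 0, 0, 0; 0, 0, 0, 0, 0; 0, 0, 0, 0, 0; 0, 0, 0, 0, 0]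

theorem randomnessMatrix_mul_rightInverse (v : Node7) :
    randomnessMatrix v * rightInverse v = 1 := by
  cases v <;> decide

theorem rank_randomnessMatrix (v : Node7) : (randomnessMatrix v).rank = 5 :=
  Matrix.rank_eq_of_mul_eq_one (randomnessMatrix_mul_rightInverse v)

theorem correctPair_A1_B1 :
    CorrectPair (ZMod 3) 4 5 10 (secretMatrix A1) (secretMatrix B1)
      (randomnessMatrix A1) (randomnessMatrix B1) :=
  correctPair_of_decoder (rank_randomnessMatrix A1) (rank_randomnessMatrix B1)
    (Av := !![0, 2, 1, 0, 0; 2, 0, 0, 0, 0; 0, 1, 0, 2, 0; 0, 1, 1, 2, 0])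
    (Au := !![1, 2, 0, 2, 1; 0, 2, 1, 1, 1; 1, 2, 2, 0, 0; 2, 0, 0, 0, 1])
    (by decide) (by decide)

theorem correctPair_A4_B1 :
    CorrectPair (ZMod 3) 4 5 10 (secretMatrix A4) (secretMatrix B1)
      (randomnessMatrix A4) (randomnessMatrix B1) :=
  correctPair_of_decoder (rank_randomnessMatrix A4) (rank_randomnessMatrix B1)
    (Av := !![1, 2, 2, 2, 2; 2, 1, 1, 0, 2; 0, 1, 0, 0, 2; 1, 1, 0, 2, 1])
    (Au := !![2, 0, 1, 1, 0; 2, 1, 0, 2, 0; 0, 0, 2, 1, 0; 0, 2, 1, 1, 0])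
    (by decide) (by decide)

theorem correctPair_A4_B2 :
    CorrectPair (ZMod 3) 4 5 10 (secretMatrix A4) (secretMatrix B2)
      (randomnessMatrix A4) (randomnessMatrix B2) :=
  correctPair_of_decoder (rank_randomnessMatrix A4) (rank_randomnessMatrix B2)
    (Av := !![2, 0, 0, 2, 2; 0, 2, 2, 0, 2; 0, 2, 0, 2, 1; 0, 2, 2, 2, 2])
    (Au := !![2, 0, 2, 0, 0; 1, 0, 0, 2, 0; 1, 1, 0, 1, 0; 2, 0, 1, 0, 0])
    (by decide) (by decide)

theorem correctPair_A4_B3 :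
    CorrectPair (ZMod 3) 4 5 10 (secretMatrix A4) (secretMatrix B3)
      (randomnessMatrix A4) (randomnessMatrix B3) :=
  correctPair_of_decoder (rank_randomnessMatrix A4) (rank_randomnessMatrix B3)
    (Av := !![1, 2, 0, 1, 0; 1, 0, 1, 1, 1; 0, 1, 2, 0, 1; 0, 2, 1, 2, 1])
    (Au := !![0, 2, 1, 1, 0; 0, 1, 2, 0, 0; 1, 2, 2, 1, 0; 0, 0, 2, 0, 0])
    (by decide) (by decide)

theorem correctPair_A3_B3 :
    CorrectPair (ZMod 3) 4 5 10 (secretMatrix A3) (secretMatrix B3)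
      (randomnessMatrix A3) (randomnessMatrix B3) :=
  correctPair_of_decoder (rank_randomnessMatrix A3) (rank_randomnessMatrix B3)
    (Av := !![2, 0, 2, 1, 0; 2, 2, 2, 1, 0; 0, 2, 1, 1, 0; 1, 0, 1, 0, 0])
    (Au := !![0, 1, 0, 0, 2; 1, 1, 2, 0, 0; 1, 2, 0, 1, 2; 0, 1, 2, 0, 0])
    (by decide) (by decide)

theorem securePair_A1_B2 :
    SecurePair (ZMod 3) 4 5 10 (secretMatrix A1) (secretMatrix B2)
      (randomnessMatrix A1) (randomnessMatrix B2) :=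
  securePair_of_simulator (T := !![2, 0, 2, 2; 1, 0, 0, 2; 2, 1, 0, 2; 2, 0, 0, 1; 2, 1, 1, 2;
                                  2, 2, 0, 2; 2, 1, 0, 2; 2, 2, 1, 2; 0, 0, 0, 0; 0, 0, 0, 0])
    (by decide) (by decide)

theorem securePair_A3_B2 :
    SecurePair (ZMod 3) 4 5 10 (secretMatrix A3) (secretMatrix B2)
      (randomnessMatrix A3) (randomnessMatrix B2) :=
  securePair_of_simulator (T := !![1, 1, 2, 2; 2, 2, 0, 2; 0, 0, 0, 2; 2, 0, 0, 1; 0, 0, 1, 2;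
                                  2, 1, 0, 1; 1, 1, 1, 1; 0, 2, 2, 0; 0, 0, 0, 0; 0, 0, 0, 0])
    (by decide) (by decide)

theorem securePair_A3_B1 :
    SecurePair (ZMod 3) 4 5 10 (secretMatrix A3) (secretMatrix B1)
      (randomnessMatrix A3) (randomnessMatrix B1) :=
  securePair_of_simulator (T := !![1, 1, 2, 2; 2, 1, 2, 0; 0, 2, 0, 0; 2, 1, 2, 0; 0, 0, 2, 2;
                                  0, 0, 1, 2; 1, 2, 1, 2; 0, 0, 0, 0; 1, 0, 1, 2; 0, 0, 0, 0])
    (by decide) (by decide)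

end Fig2

/-- **Rate `2/5` scheme for the instance of Figure 2.** There is a linear CDS
scheme over `𝔽₃` with secret length `L = 4` and signal length `N = 5` for the CDS
instance on nodes `A1, A2, A3, A4, B1, B2, B3` with qualified edges
`{A1,B1}, {A4,B1}, {A4,B2}, {A4,B3}, {A3,B3}` and unqualified edges
`{A1,B2}, {A3,B2}, {A3,B1}`; hence the linear rate `2/5` is achievable. -/
theorem cds_fig2_achievability :
    ∃ (LZ : ℕ), 0 < LZ ∧
      ∃ (Fm : Node7 → Matrix (Fin 5) (Fin 4) (ZMod 3))
        (Hm : Node7 → Matrix (Fin 5) (Fin LZ) (ZMod 3)),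
        (∀ v, (Hm v).rank = 5) ∧
        CorrectPair (ZMod 3) 4 5 LZ (Fm A1) (Fm B1) (Hm A1) (Hm B1) ∧
        CorrectPair (ZMod 3) 4 5 LZ (Fm A4) (Fm B1) (Hm A4) (Hm B1) ∧
        CorrectPair (ZMod 3) 4 5 LZ (Fm A4) (Fm B2) (Hm A4) (Hm B2) ∧
        CorrectPair (ZMod 3) 4 5 LZ (Fm A4) (Fm B3) (Hm A4) (Hm B3) ∧
        CorrectPair (ZMod 3) 4 5 LZ (Fm A3) (Fm B3) (Hm A3) (Hm B3) ∧
        SecurePair (ZMod 3) 4 5 LZ (Fm A1) (Fm B2) (Hm A1) (Hm B2) ∧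
        SecurePair (ZMod 3) 4 5 LZ (Fm A3) (Fm B2) (Hm A3) (Hm B2) ∧
        SecurePair (ZMod 3) 4 5 LZ (Fm A3) (Fm B1) (Hm A3) (Hm B1) :=
  ⟨10, by norm_num, Fig2.secretMatrix, Fig2.randomnessMatrix, Fig2.rank_randomnessMatrix,
    Fig2.correctPair_A1_B1, Fig2.correctPair_A4_B1, Fig2.correctPair_A4_B2,
    Fig2.correctPair_A4_B3, Fig2.correctPair_A3_B3, Fig2.securePair_A1_B2,
    Fig2.securePair_A3_B2, Fig2.securePair_A3_B1⟩
end
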